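/- arXiv:2411.18584 — 2 statements merged into one kernel-verified Lean document; each statement's English description precedes it below -/
import Mathlib

section
/- Let 1 ≤ i ≤ n−2 and i < j ≤ n, and let L be any ordered list of distinct elements of ±[n]. Then for every w ∈ D_n, s_j·( h_{i, L}( s_j·w ) ) = h_{i, s_j(L)}(w), where · is the ordinary product. -/
open Equiv

/-- The key of `a : ℤ` in the total order `1 < 2 < ⋯ < n < -n < ⋯ < -2 < -1` on `±[n]`:
elements of `±[n]` get the keys `1, …, 2n` (in order); anything else gets key `2n+1`. -/
def dkey (n : ℕ) (a : ℤ) : ℤ :=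
  if 1 ≤ a ∧ a ≤ (n : ℤ) then a
  else if -(n : ℤ) ≤ a ∧ a ≤ -1 then 2 * n + 1 + a
  else 2 * n + 1

/-- `a < b` in the total order `1 < 2 < ⋯ < n < -n < ⋯ < -2 < -1` on `±[n]`. -/
def dlt (n : ℕ) (a b : ℤ) : Prop := dkey n a < dkey n b

instance (n : ℕ) (a b : ℤ) : Decidable (dlt n a b) :=
  inferInstanceAs (Decidable (dkey n a < dkey n b))

/-- `a` is an element of `±[n] = {1,…,n} ∪ {-1,…,-n}`. -/
def inPM (n : ℕ) (a : ℤ) : Prop := a ≠ 0 ∧ |a| ≤ (n : ℤ)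

instance (n : ℕ) (a : ℤ) : Decidable (inPM n a) :=
  inferInstanceAs (Decidable (a ≠ 0 ∧ |a| ≤ (n : ℤ)))

/-- The element of `±[n]` whose key is `k` (for `1 ≤ k ≤ 2n`). -/
def ofKey (n : ℕ) (k : ℤ) : ℤ := if k ≤ (n : ℤ) then k else k - (2 * n + 1)

/-- A signed permutation of `±[n]`, viewed as a permutation of `ℤ`:
it commutes with negation and fixes everything outside `±[n]`. -/
def IsSignedPerm (n : ℕ) (w : Perm ℤ) : Prop :=
  (∀ a : ℤ, w (-a) = -(w a)) ∧ ∀ a : ℤ, (n : ℤ) < |a| → w a = a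

/-- An even signed permutation of `±[n]`, i.e. an element of the group `D_n`. -/
def IsEvenSignedPerm (n : ℕ) (w : Perm ℤ) : Prop :=
  IsSignedPerm n w ∧ Even ((Finset.Icc (1 : ℤ) (n : ℤ)).filter fun i => w i < 0).card

/-- The simple generators `s_1, …, s_n` of `D_n`:  for `1 ≤ i ≤ n-1`, `s_i` exchanges the
values `i ↔ i+1` and `-i ↔ -(i+1)`;  `s_n` exchanges the values `n-1 ↔ -n` and `n ↔ -(n-1)`. -/
def sgen (n i : ℕ) : Perm ℤ :=
  if i = n then Equiv.swap ((n : ℤ) - 1) (-(n : ℤ)) * Equiv.swap (n : ℤ) (-((n : ℤ) - 1))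
  else Equiv.swap (i : ℤ) ((i : ℤ) + 1) * Equiv.swap (-(i : ℤ)) (-((i : ℤ) + 1))

/-- The product `s_{l₁} s_{l₂} ⋯ s_{l_k}` of the word `l = [l₁, …, l_k]`. -/
def wordProd (n : ℕ) (l : List ℕ) : Perm ℤ := (l.map (sgen n)).prod

/-- The Coxeter length of `w ∈ D_n`: the least length of a word in `s_1, …, s_n` whose
product is `w`. -/
noncomputable def DLength (n : ℕ) (w : Perm ℤ) : ℕ :=
  sInf {k | ∃ l : List ℕ, (∀ i ∈ l, 1 ≤ i ∧ i ≤ n) ∧ l.length = k ∧ wordProd n l = w}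

/-- `dem` is the Demazure product of the Coxeter group `D_n`: the (unique) associative
product on `D_n`, with identity `id`, such that for each simple generator `s` and `u ∈ D_n`,
`s ⋆ u = s·u` if `ℓ(s·u) > ℓ(u)`, and `s ⋆ u = u` if `ℓ(s·u) < ℓ(u)`. -/
def IsDemazure (n : ℕ) (dem : Perm ℤ → Perm ℤ → Perm ℤ) : Prop :=
  (∀ u v, IsEvenSignedPerm n u → IsEvenSignedPerm n v → IsEvenSignedPerm n (dem u v)) ∧
  (∀ u v w, IsEvenSignedPerm n u → IsEvenSignedPerm n v → IsEvenSignedPerm n w →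
      dem (dem u v) w = dem u (dem v w)) ∧
  (∀ u, IsEvenSignedPerm n u → dem 1 u = u ∧ dem u 1 = u) ∧
  (∀ i, 1 ≤ i → i ≤ n → ∀ u, IsEvenSignedPerm n u →
      (DLength n u < DLength n (sgen n i * u) → dem (sgen n i) u = sgen n i * u) ∧
      (DLength n (sgen n i * u) < DLength n u → dem (sgen n i) u = u))

/-- The swap performed in one step of the hopping procedure: exchange the values `t ↔ q`
and simultaneously `-t ↔ -q` (unless `t = -q`). -/
def hswap (t q : ℤ) : Perm ℤ :=
  if t = -q then Equiv.swap t q else Equiv.swap t q * Equiv.swap (-t) (-q)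

/-- `q` is eligible for hopping `t` in `w`: `q ∈ ±[n]`, `q > t` in the order on `±[n]`,
and `q` occurs strictly to the right of `t` in the unfolding of `w`. -/
def HopStep (n : ℕ) (w : Perm ℤ) (t q : ℤ) : Prop :=
  inPM n q ∧ dlt n t q ∧ dkey n (w⁻¹ t) < dkey n (w⁻¹ q) ∧ dkey n (w⁻¹ q) ≤ 2 * n

instance (n : ℕ) (w : Perm ℤ) (t q : ℤ) : Decidable (HopStep n w t q) :=
  inferInstanceAs (Decidable
    (inPM n q ∧ dlt n t q ∧ dkey n (w⁻¹ t) < dkey n (w⁻¹ q) ∧ dkey n (w⁻¹ q) ≤ 2 * n))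

theorem hop_measure (n : ℕ) (w : Perm ℤ) (t q : ℤ) (h : HopStep n w t q) :
    (2 * (n : ℤ) + 1 - dkey n ((hswap t q * w)⁻¹ t)).toNat
      < (2 * (n : ℤ) + 1 - dkey n (w⁻¹ t)).toNat := by
  obtain ⟨⟨hq0, _⟩, _, hlt, hle⟩ := h
  have key : (hswap t q * w)⁻¹ t = w⁻¹ q := by
    have hs : (hswap t q)⁻¹ t = q := by
      unfold hswap
      split_ifs with he
      · subst he
        simp [Equiv.swap_inv, Equiv.swap_apply_left]
      · have h1 : q ≠ -t := fun hc => he (by omega)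
        have h2 : q ≠ -q := fun hc => hq0 (by omega)
        simp [mul_inv_rev, Equiv.swap_inv, Equiv.Perm.mul_apply, Equiv.swap_apply_left,
          Equiv.swap_apply_of_ne_of_ne h1 h2]
    rw [mul_inv_rev, Equiv.Perm.mul_apply, hs]
  rw [key]
  omega

/-- The hopping operator `h_{t,L}`: repeatedly pick the element `q` of `L`, occurring
latest in `L`, among those greater than `t` occurring strictly to the right of `t` in
the unfolding of `w`; swap the values `t ↔ q` (and `-t ↔ -q`, unless `t = -q`); stop
when no such `q` exists. -/
def hop (n : ℕ) (t : ℤ) (L : List ℤ) (w : Perm ℤ) : Perm ℤ :=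
  match h : L.reverse.find? (fun q => decide (HopStep n w t q)) with
  | none => w
  | some q => hop n t L (hswap t q * w)
termination_by (2 * (n : ℤ) + 1 - dkey n (w⁻¹ t)).toNat
decreasing_by
  have hq := List.find?_some h
  simp only [decide_eq_true_eq] at hq
  exact hop_measure n w t q hq

/-- The unfolding `[w(1), …, w(n), -w(n), …, -w(1)]` of a signed permutation `w`. -/
def unfoldList (n : ℕ) (w : Perm ℤ) : List ℤ :=
  (List.range (2 * n)).map fun p => w (ofKey n ((p : ℤ) + 1))

/-- `w ↖ t`: the ordered list of entries of the unfolding of `w` occurring strictly to the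
left of the value `t` and lying strictly between `t` and `-t` in the order on `±[n]`. -/
def liftD (n : ℕ) (w : Perm ℤ) (t : ℤ) : List ℤ :=
  ((unfoldList n w).take (dkey n (w⁻¹ t) - 1).toNat).filter
    fun a => decide (dlt n t a ∧ dlt n a (-t))

/-- `L ∼ₜ L'` : the hopping operators `h_{t,L}` and `h_{t,L'}` agree on all of `D_n`. -/
def HopEquiv (n : ℕ) (t : ℤ) (L L' : List ℤ) : Prop :=
  ∀ u : Perm ℤ, IsEvenSignedPerm n u → hop n t L u = hop n t L' u

/-- The list `[a, a+1, …, b]` (as integers). -/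
def listUp (a b : ℕ) : List ℤ := (List.range (b + 1 - a)).map fun k => (a : ℤ) + k

/-- The list `[-b, -(b-1), …, -a]` (as integers). -/
def listNegUp (a b : ℕ) : List ℤ := (List.range (b + 1 - a)).map fun k => -(b : ℤ) + k

/-- For `1 ≤ i ≤ n-2` : `Q` is one of the minimal coset representatives
(form 0: `id`; form 1: `s_i ⋯ s_j`; form 2: `s_i ⋯ s_{n-2} s_n s_{n-1} ⋯ s_j`;
form 3: `s_i ⋯ s_{n-2} s_n`). -/
def QForm (n i : ℕ) (Q : Perm ℤ) : Prop :=
  Q = 1 ∨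
  (∃ j, i ≤ j ∧ j ≤ n - 1 ∧ Q = wordProd n (List.range' i (j + 1 - i))) ∨
  (∃ j, i ≤ j ∧ j ≤ n - 1 ∧
    Q = wordProd n (List.range' i (n - 1 - i) ++ [n] ++ (List.range' j (n - j)).reverse)) ∨
  Q = wordProd n (List.range' i (n - 1 - i) ++ [n])

/-- `Q` is one of the four elements `id`, `s_{n-1}`, `s_n s_{n-1}`, `s_n` of
`W_{{s_{n-1}, s_n}}`. -/
def QFormTop (n : ℕ) (Q : Perm ℤ) : Prop :=
  Q = 1 ∨ Q = sgen n (n - 1) ∨ Q = sgen n n * sgen n (n - 1) ∨ Q = sgen n n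

/-- For `1 ≤ i ≤ n-2`: `(Q, L)` is a factor of a parabolic factorization together with
its associated list `L_i`. -/
def QList (n i : ℕ) (Q : Perm ℤ) (L : List ℤ) : Prop :=
  (Q = 1 ∧ L = []) ∨
  (∃ j, i ≤ j ∧ j ≤ n - 1 ∧ Q = wordProd n (List.range' i (j + 1 - i)) ∧
    L = listUp (i + 1) (j + 1)) ∨
  (∃ j, i ≤ j ∧ j ≤ n - 1 ∧
    Q = wordProd n (List.range' i (n - 1 - i) ++ [n] ++ (List.range' j (n - j)).reverse) ∧
    L = listUp (i + 1) n ++ listNegUp (j + 1) n) ∨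
  (Q = wordProd n (List.range' i (n - 1 - i) ++ [n]) ∧
    L = listUp (i + 1) (n - 1) ++ [-(n : ℤ)])

/-- `(Q, L)` is the top factor `Q_{n-1}` of a parabolic factorization together with its
associated list `L_{n-1}`. -/
def QListTop (n : ℕ) (Q : Perm ℤ) (L : List ℤ) : Prop :=
  (Q = 1 ∧ L = []) ∨ (Q = sgen n (n - 1) ∧ L = [(n : ℤ)]) ∨
  (Q = sgen n n * sgen n (n - 1) ∧ L = [(n : ℤ), -(n : ℤ)]) ∨
  (Q = sgen n n ∧ L = [-(n : ℤ)])

/-- The partial product `Q_{n-1} Q_{n-2} ⋯ Q_k` of a parabolic factorization. -/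
def prodQ (n : ℕ) (Q : ℕ → Perm ℤ) (k : ℕ) : Perm ℤ :=
  (((List.range' k (n - k)).reverse).map Q).prod

/-- The letterwise extended Demazure action of the generator `s_i` (for `1 ≤ i ≤ n-1`) on an
arbitrary signed permutation: `s_i ⋆ u = s_i·u` if the value `i` occurs strictly to the left
of the value `i+1` in the unfolding of `u`, and `u` otherwise. -/
def demStep (n i : ℕ) (u : Perm ℤ) : Perm ℤ :=
  if dkey n (u⁻¹ (i : ℤ)) < dkey n (u⁻¹ ((i : ℤ) + 1)) then sgen n i * u else u

/-- The letterwise extended Demazure action of a word: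
`(s_{a₁} ⋯ s_{a_k}) ⋆ u = s_{a₁} ⋆ (s_{a₂} ⋆ (⋯ (s_{a_k} ⋆ u)))`. -/
def demWord (n : ℕ) (l : List ℕ) (u : Perm ℤ) : Perm ℤ := l.foldr (demStep n) u

/-- A member of the symmetric group on `±[n]`, viewed as a permutation of `ℤ`:
it fixes `0` and everything of absolute value `> n`. -/
def IsPermPM (n : ℕ) (w : Perm ℤ) : Prop := ∀ a : ℤ, a = 0 ∨ (n : ℤ) < |a| → w a = a

/-- The simple generators of the symmetric group on `±[n]` (type `A_{2n-1}`):
`agen n k` (for `1 ≤ k ≤ 2n-1`) transposes the order-adjacent elements of `±[n]`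
with keys `k` and `k+1`. -/
def agen (n k : ℕ) : Perm ℤ := Equiv.swap (ofKey n (k : ℤ)) (ofKey n ((k : ℤ) + 1))

/-- The Coxeter length of an element of the symmetric group on `±[n]`. -/
noncomputable def ALength (n : ℕ) (w : Perm ℤ) : ℕ :=
  sInf {k | ∃ l : List ℕ, (∀ i ∈ l, 1 ≤ i ∧ i ≤ 2 * n - 1) ∧ l.length = k ∧
    (l.map (agen n)).prod = w}

/-- `dem` is the Demazure product of the symmetric group on `±[n]`, viewed as a Coxeter
group of type `A_{2n-1}` with simple generators the transpositions of order-adjacent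
elements of `±[n]`. -/
def IsDemazureA (n : ℕ) (dem : Perm ℤ → Perm ℤ → Perm ℤ) : Prop :=
  (∀ u v, IsPermPM n u → IsPermPM n v → IsPermPM n (dem u v)) ∧
  (∀ u v w, IsPermPM n u → IsPermPM n v → IsPermPM n w →
      dem (dem u v) w = dem u (dem v w)) ∧
  (∀ u, IsPermPM n u → dem 1 u = u ∧ dem u 1 = u) ∧
  (∀ k, 1 ≤ k → k ≤ 2 * n - 1 → ∀ u, IsPermPM n u →
      (ALength n u < ALength n (agen n k * u) → dem (agen n k) u = agen n k * u) ∧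
      (ALength n (agen n k * u) < ALength n u → dem (agen n k) u = u))

/-! Conjugation by a signed permutation `σ` that fixes `t` and preserves which values lie
above `t` turns every hopping step of `w` along `L` into a hopping step of `σ w` along `σ(L)`,
the swap `t ↔ q` becoming `t ↔ σ q`. Hence `h_{t,σ(L)}(σ w) = σ h_{t,L}(w)`, and for `t = i`
the involution `s_j` with `j > i` is such a `σ`. -/

section Hop

variable {n : ℕ} {t : ℤ} {L : List ℤ} {w σ : Perm ℤ}

theorem hop_of_find?_eq_none (h : L.reverse.find? (fun q => decide (HopStep n w t q)) = none) :
    hop n t L w = w := by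
  rw [hop.eq_1]; split <;> simp_all

theorem hop_of_find?_eq_some {q : ℤ}
    (h : L.reverse.find? (fun q => decide (HopStep n w t q)) = some q) :
    hop n t L w = hop n t L (hswap t q * w) := by
  rw [hop.eq_1]; split <;> simp_all

theorem hswap_apply_apply (hσ : ∀ a, σ (-a) = -σ a) (t q : ℤ) :
    hswap (σ t) (σ q) = σ * hswap t q * σ⁻¹ := by
  have hneg : σ t = -σ q ↔ t = -q := by rw [← hσ, σ.injective.eq_iff]
  unfold hswap
  by_cases h : t = -q
  · rw [if_pos h, if_pos (hneg.mpr h), swap_apply_apply]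
  · rw [if_neg h, if_neg (hneg.not.mpr h), ← hσ, ← hσ, swap_apply_apply, swap_apply_apply]
    group

theorem IsSignedPerm.apply_zero (hσ : IsSignedPerm n σ) : σ 0 = 0 := by
  have := hσ.1 0
  rw [neg_zero] at this
  omega

theorem IsSignedPerm.apply_eq_self_of_not_inPM (hσ : IsSignedPerm n σ) {a : ℤ}
    (ha : ¬inPM n a) : σ a = a := by
  rcases eq_or_ne a 0 with rfl | ha0
  · exact hσ.apply_zero
  · exact hσ.2 a (by simpa [inPM, ha0] using ha)

theorem IsSignedPerm.inPM_apply_iff (hσ : IsSignedPerm n σ) (a : ℤ) :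
    inPM n (σ a) ↔ inPM n a := by
  by_cases ha : inPM n a
  · refine iff_of_true (by_contra fun hσa => ?_) ha
    have hfix : σ a = a := σ.injective (hσ.apply_eq_self_of_not_inPM hσa)
    exact (hfix ▸ hσa) ha
  · rw [hσ.apply_eq_self_of_not_inPM ha]

theorem hopStep_mul_apply_iff (hσ : IsSignedPerm n σ) (ht : σ t = t)
    (hlt : ∀ q, dlt n t (σ q) ↔ dlt n t q) (q : ℤ) :
    HopStep n (σ * w) t (σ q) ↔ HopStep n w t q := by
  have hinv_t : (σ * w)⁻¹ t = w⁻¹ t := by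
    rw [mul_inv_rev, Perm.mul_apply, Perm.inv_eq_iff_eq.mpr ht.symm]
  have hinv_q : (σ * w)⁻¹ (σ q) = w⁻¹ q := by simp
  rw [HopStep, HopStep, hinv_t, hinv_q, hσ.inPM_apply_iff, hlt]

theorem hop_map_mul (hσ : IsSignedPerm n σ) (ht : σ t = t)
    (hlt : ∀ q, dlt n t (σ q) ↔ dlt n t q) :
    hop n t (L.map σ) (σ * w) = σ * hop n t L w := by
  have hfind : ∀ w : Perm ℤ,
      (L.map σ).reverse.find? (fun q => decide (HopStep n (σ * w) t q))
        = (L.reverse.find? (fun q => decide (HopStep n w t q))).map σ := by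
    intro w
    rw [← List.map_reverse, List.find?_map]
    congr 2
    funext q
    simp only [Function.comp_apply, hopStep_mul_apply_iff hσ ht hlt]
  induction w using hop.induct n t L with
  | case1 w hnone =>
    rw [hop_of_find?_eq_none hnone, hop_of_find?_eq_none (by rw [hfind, hnone]; rfl)]
  | case2 w q hsome ih =>
    have hconj : hswap t (σ q) = σ * hswap t q * σ⁻¹ := by
      conv_lhs => rw [← ht]
      exact hswap_apply_apply hσ.1 t q
    rw [hop_of_find?_eq_some hsome, ← ih,
      hop_of_find?_eq_some (q := σ q) (by rw [hfind, hsome]; rfl), hconj]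
    group

end Hop

section Generators

variable {n i j : ℕ}

theorem isSignedPerm_sgen (hj1 : 1 ≤ j) (hj : j ≤ n) (hn : 2 ≤ n) :
    IsSignedPerm n (sgen n j) := by
  refine ⟨fun a => ?_, fun a ha => ?_⟩ <;> [skip; rw [lt_abs] at ha] <;> unfold sgen <;>
    split_ifs <;> simp only [Perm.mul_apply, swap_apply_def] <;> split_ifs <;> omega

theorem sgen_mul_self (hj1 : 1 ≤ j) (hn : 2 ≤ n) : sgen n j * sgen n j = 1 := by
  have swap_mul_swap_sq : ∀ x y z t : ℤ, [x, y, z, t].Nodup →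
      (swap x y * swap z t) * (swap x y * swap z t) = 1 := by
    intro x y z t h
    rw [← sq, (Perm.disjoint_swap_swap h).commute.mul_pow, sq, sq, swap_mul_self,
      swap_mul_self, one_mul]
  unfold sgen
  split_ifs <;> refine swap_mul_swap_sq _ _ _ _ ?_ <;>
    simp only [List.nodup_cons, List.mem_cons, List.not_mem_nil, or_false, List.nodup_nil,
      not_false_eq_true, and_true] <;> omega

theorem sgen_apply_of_lt (hij : i < j) (hin : i + 2 ≤ n) : sgen n j i = i := by
  unfold sgen
  split_ifs <;> simp only [Perm.mul_apply, swap_apply_def] <;> split_ifs <;> omega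

theorem dlt_sgen_iff (hij : i < j) (hin : i + 2 ≤ n) (q : ℤ) :
    dlt n i (sgen n j q) ↔ dlt n i q := by
  unfold dlt sgen
  split_ifs <;> simp only [dkey, Perm.mul_apply, swap_apply_def] <;> split_ifs <;> omega

end Generators

theorem hop_conjugate_irrelevant_general (n : ℕ) (i j : ℕ)
    (hi : 1 ≤ i) (hi' : i ≤ n - 2) (hij : i < j) (hj : j ≤ n)
    (L : List ℤ) (w : Perm ℤ) :
    sgen n j * hop n (i : ℤ) L (sgen n j * w) = hop n (i : ℤ) (L.map ⇑(sgen n j)) w := by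
  have hin : i + 2 ≤ n := by omega
  rw [← hop_map_mul (isSignedPerm_sgen (by omega) hj (by omega)) (sgen_apply_of_lt hij hin)
    (dlt_sgen_iff hij hin), ← mul_assoc, sgen_mul_self (by omega) (by omega), one_mul]

/-- for `1 ≤ i ≤ n-2`, `i < j ≤ n`, any list `L` of distinct elements of
`±[n]`, and `w ∈ D_n`, `s_j · h_{i,L}(s_j·w) = h_{i, s_j(L)}(w)`. -/
theorem hop_conjugate_irrelevant (n : ℕ) (hn : 3 ≤ n) (i j : ℕ)
    (hi : 1 ≤ i) (hi' : i ≤ n - 2) (hij : i < j) (hj : j ≤ n)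
    (L : List ℤ) (hnd : L.Nodup) (hmem : ∀ a ∈ L, inPM n a)
    (w : Perm ℤ) (hw : IsEvenSignedPerm n w) :
    sgen n j * hop n (i : ℤ) L (sgen n j * w) = hop n (i : ℤ) (L.map ⇑(sgen n j)) w :=
  hop_conjugate_irrelevant_general n i j hi hi' hij hj L w
end

section
/- Let n = 4 and let w, v ∈ D_4 be the even signed permutations with one-line notations [1, 4, −2, −3] and [4, −1, 2, −3] respectively. Then: (a) the Demazure product in the Coxeter group D_4 is w ⋆ v = [−2, −1, 4, 3]; (b) regarding w and v as elements of the symmetric group on the 8-element linearly ordered set ±[4] (a Coxeter group of type A_7 whose simple generators are the transpositions of order-adjacent elements of ±[4]), their Demazure product in that symmetric group is the bijection u of ±[4] with u(1) = −2, u(2) = −1, u(3) = 4, u(4) = −3 (and u(−a) = −u(a)); (c) u is a signed permutation that is not even (exactly three of u(1), u(2), u(3), u(4) are negative), so u ∉ D_4 and u ≠ w ⋆ v. Hence the type-B identity expressing the Demazure product of folded elements as the fold of the Demazure product of their unfoldings fails in type D. -/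
open Equiv

/-!
Both Demazure products are computed by peeling a reduced word of `w` off letter by letter:
if `s_{i₁} ⋯ s_{i_k}` is reduced then `w ⋆ v = s_{i₁} ⋆ (⋯ (s_{i_k} ⋆ v))`, and `s ⋆ u` is
`s u` or `u` according as `s` is an ascent or a descent of `u`. Lower bounds for lengths come
from counting inversions of the unfolding: one generator changes that count by at most one in
type `A` and by at most two in type `D`, so a word whose product attains the bound is reduced.
Descents are certified by the exchange condition, i.e. by deleting one letter of a reduced word.
-/

section WordLength

variable {G : Type*} [Group G]

/-- This is `0` on elements that are not products of generators (`sInf ∅ = 0`). -/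
noncomputable def wordLength (S : ℕ → G) (V : ℕ → Prop) (g : G) : ℕ :=
  sInf {k | ∃ l : List ℕ, (∀ i ∈ l, V i) ∧ l.length = k ∧ (l.map S).prod = g}

def IsReducedWord (S : ℕ → G) (V : ℕ → Prop) (l : List ℕ) : Prop :=
  (∀ i ∈ l, V i) ∧ wordLength S V (l.map S).prod = l.length

variable {S : ℕ → G} {V : ℕ → Prop} {l : List ℕ} {i : ℕ}

theorem wordLength_prod_le (hl : ∀ j ∈ l, V j) : wordLength S V (l.map S).prod ≤ l.length :=
  Nat.sInf_le ⟨l, hl, rfl, rfl⟩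

theorem exists_word_length_eq_wordLength (hl : ∀ j ∈ l, V j) :
    ∃ l' : List ℕ, (∀ j ∈ l', V j) ∧ l'.length = wordLength S V (l.map S).prod ∧
      (l'.map S).prod = (l.map S).prod :=
  Nat.sInf_mem (s := {k | ∃ l' : List ℕ, (∀ i ∈ l', V i) ∧ l'.length = k ∧
    (l'.map S).prod = (l.map S).prod}) ⟨l.length, l, hl, rfl, rfl⟩

theorem wordLength_mul_prod_le (hi : V i) (hl : ∀ j ∈ l, V j) :
    wordLength S V (S i * (l.map S).prod) ≤ wordLength S V (l.map S).prod + 1 := by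
  obtain ⟨l', hl', hlen, hprod⟩ := exists_word_length_eq_wordLength (S := S) hl
  calc wordLength S V (S i * (l.map S).prod) = wordLength S V ((i :: l').map S).prod := by
        rw [List.map_cons, List.prod_cons, hprod]
    _ ≤ (i :: l').length := wordLength_prod_le (List.forall_mem_cons.2 ⟨hi, hl'⟩)
    _ = wordLength S V (l.map S).prod + 1 := by rw [List.length_cons, hlen]

theorem IsReducedWord.of_cons (h : IsReducedWord S V (i :: l)) : IsReducedWord S V l := by
  obtain ⟨hil, hlen⟩ := h
  rw [List.forall_mem_cons] at hil
  rw [List.map_cons, List.prod_cons, List.length_cons] at hlen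
  have := wordLength_mul_prod_le (S := S) hil.1 hil.2
  exact ⟨hil.2, le_antisymm (wordLength_prod_le hil.2) (by omega)⟩

theorem count_prod_le {c : G → ℕ} {m : ℕ} (hc1 : c 1 = 0)
    (hc : ∀ i (l : List ℕ), V i → (∀ j ∈ l, V j) →
      c (S i * (l.map S).prod) ≤ c (l.map S).prod + m) :
    ∀ l : List ℕ, (∀ j ∈ l, V j) → c (l.map S).prod ≤ m * l.length
  | [], _ => by simp [hc1]
  | i :: l, hl => by
    rw [List.forall_mem_cons] at hl
    have := count_prod_le hc1 hc l hl.2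
    have := hc i l hl.1 hl.2
    rw [List.map_cons, List.prod_cons, List.length_cons, mul_add, mul_one]
    omega

theorem isReducedWord_of_count {c : G → ℕ} {m : ℕ} (hc1 : c 1 = 0)
    (hc : ∀ i (l : List ℕ), V i → (∀ j ∈ l, V j) →
      c (S i * (l.map S).prod) ≤ c (l.map S).prod + m)
    (hm : 0 < m) (hl : ∀ j ∈ l, V j) (h : c (l.map S).prod = m * l.length) :
    IsReducedWord S V l := by
  obtain ⟨l', hl', hlen, hprod⟩ := exists_word_length_eq_wordLength (S := S) hl
  have := count_prod_le hc1 hc l' hl'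
  rw [hprod, h, hlen] at this
  exact ⟨hl, le_antisymm (wordLength_prod_le hl) (Nat.le_of_mul_le_mul_left this hm)⟩

structure IsDemazureProduct (S : ℕ → G) (V : ℕ → Prop) (M : G → Prop)
    (dem : G → G → G) : Prop where
  assoc : ∀ u v w, M u → M v → M w → dem (dem u v) w = dem u (dem v w)
  one_dem : ∀ u, M u → dem 1 u = u
  gen_dem_of_lt : ∀ i, V i → ∀ u, M u →
    wordLength S V u < wordLength S V (S i * u) → dem (S i) u = S i * u
  gen_dem_of_gt : ∀ i, V i → ∀ u, M u →
    wordLength S V (S i * u) < wordLength S V u → dem (S i) u = u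

namespace IsDemazureProduct

variable {M : G → Prop} {dem : G → G → G}

theorem gen_dem_prod_of_isReducedWord (h : IsDemazureProduct S V M dem)
    (hM : ∀ l : List ℕ, (∀ j ∈ l, V j) → M (l.map S).prod)
    (hred : IsReducedWord S V (i :: l)) :
    dem (S i) (l.map S).prod = ((i :: l).map S).prod := by
  have hl := hred.of_cons
  refine h.gen_dem_of_lt i (hred.1 i List.mem_cons_self) _ (hM l hl.1) ?_
  have hlen := hred.2
  rw [List.map_cons, List.prod_cons, List.length_cons] at hlen
  rw [hlen, hl.2]
  exact Nat.lt_succ_self _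

theorem gen_dem_prod_of_exchange (h : IsDemazureProduct S V M dem)
    (hM : ∀ l : List ℕ, (∀ j ∈ l, V j) → M (l.map S).prod) (hi : V i)
    (hred : IsReducedWord S V l) {j : ℕ} (hj : j < l.length)
    (hex : S i * (l.map S).prod = ((l.eraseIdx j).map S).prod) :
    dem (S i) (l.map S).prod = (l.map S).prod := by
  refine h.gen_dem_of_gt i hi _ (hM l hred.1) ?_
  rw [hex, hred.2]
  calc wordLength S V ((l.eraseIdx j).map S).prod ≤ (l.eraseIdx j).length :=
        wordLength_prod_le fun k hk => hred.1 k (List.mem_of_mem_eraseIdx hk)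
    _ < l.length := by rw [List.length_eraseIdx_of_lt hj]; omega

theorem dem_prod_eq_foldr (h : IsDemazureProduct S V M dem)
    (hM : ∀ l : List ℕ, (∀ j ∈ l, V j) → M (l.map S).prod) {v : G} (hv : M v) :
    ∀ {l : List ℕ}, IsReducedWord S V l →
      dem (l.map S).prod v = l.foldr (fun i u => dem (S i) u) v
  | [], _ => h.one_dem v hv
  | i :: l, hred => by
    have hl := hred.of_cons
    have hSi : M (S i) := by simpa using hM [i] (by simpa using hred.1 i List.mem_cons_self)
    rw [← h.gen_dem_prod_of_isReducedWord hM hred, h.assoc _ _ _ hSi (hM l hl.1) hv,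
      h.dem_prod_eq_foldr hM hv hl, List.foldr_cons]

end IsDemazureProduct

end WordLength

noncomputable def pm (n : ℕ) : Finset ℤ := (Finset.Icc (-(n : ℤ)) n).erase 0

theorem notMem_pm {n : ℕ} {a : ℤ} : a ∉ pm n ↔ a = 0 ∨ (n : ℤ) < |a| := by
  simp only [pm, Finset.mem_erase, Finset.mem_Icc, lt_abs]
  omega

namespace IsPermPM

variable {n : ℕ} {u v : Perm ℤ}

theorem apply_mem_pm (hu : IsPermPM n u) {a : ℤ} (ha : a ∈ pm n) : u a ∈ pm n := by
  by_contra h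
  have hfix : u (u a) = u a := hu _ (notMem_pm.1 h)
  rw [u.injective hfix] at h
  exact h ha

theorem mul (hu : IsPermPM n u) (hv : IsPermPM n v) : IsPermPM n (u * v) := fun a ha => by
  rw [Perm.mul_apply, hv a ha, hu a ha]

theorem ext (hu : IsPermPM n u) (hv : IsPermPM n v) (h : ∀ a ∈ pm n, u a = v a) : u = v :=
  Equiv.ext fun a => by
    by_cases ha : a ∈ pm n
    · exact h a ha
    · rw [hu a (notMem_pm.1 ha), hv a (notMem_pm.1 ha)]

theorem isSignedPerm (hu : IsPermPM n u) (h : ∀ a ∈ pm n, u (-a) = -u a) :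
    IsSignedPerm n u := by
  refine ⟨fun a => ?_, fun a ha => hu a (Or.inr ha)⟩
  by_cases ha : a ∈ pm n
  · exact h a ha
  · have hna : -a ∉ pm n := by rw [notMem_pm, abs_neg, neg_eq_zero]; exact notMem_pm.1 ha
    rw [hu a (notMem_pm.1 ha), hu (-a) (notMem_pm.1 hna)]

end IsPermPM

noncomputable def signProd (n : ℕ) (u : Perm ℤ) : ℤ :=
  ∏ j ∈ Finset.Icc (1 : ℤ) n, Int.sign (u j)

namespace IsSignedPerm

variable {n : ℕ} {u v : Perm ℤ}

theorem isPermPM (hu : IsSignedPerm n u) : IsPermPM n u := by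
  rintro a (rfl | ha)
  · have := hu.1 0
    rw [neg_zero] at this
    omega
  · exact hu.2 a ha

theorem mul (hu : IsSignedPerm n u) (hv : IsSignedPerm n v) : IsSignedPerm n (u * v) :=
  ⟨fun a => by rw [Perm.mul_apply, hv.1, hu.1, Perm.mul_apply],
    fun a ha => by rw [Perm.mul_apply, hv.2 a ha, hu.2 a ha]⟩

theorem ext (hu : IsSignedPerm n u) (hv : IsSignedPerm n v)
    (h : ∀ a ∈ Finset.Icc (1 : ℤ) n, u a = v a) : u = v := by
  refine hu.isPermPM.ext hv.isPermPM fun a ha => ?_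
  have ha' : a ≠ 0 ∧ -(n : ℤ) ≤ a ∧ a ≤ n := by simpa [pm, and_assoc] using ha
  rcases lt_or_gt_of_ne ha'.1 with hneg | hpos
  · rw [← neg_neg a, hu.1, hv.1, h (-a) (Finset.mem_Icc.2 ⟨by omega, by omega⟩)]
  · exact h a (Finset.mem_Icc.2 ⟨hpos, ha'.2.2⟩)

theorem sign_apply (hu : IsSignedPerm n u) (a : ℤ) :
    Int.sign (u a) = Int.sign (u |a|) * Int.sign a := by
  rcases lt_trichotomy a 0 with h | rfl | h
  · rw [abs_of_neg h, Int.sign_eq_neg_one_of_neg h, hu.1, Int.sign_neg]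
    ring
  · simp [hu.isPermPM 0 (Or.inl rfl)]
  · rw [abs_of_pos h, Int.sign_eq_one_of_pos h, mul_one]


theorem abs_apply_mem_Icc (hu : IsSignedPerm n u) {j : ℤ} (hj : j ∈ Finset.Icc (1 : ℤ) n) :
    |u j| ∈ Finset.Icc (1 : ℤ) n := by
  have hj' : j ∈ pm n := by
    rw [Finset.mem_Icc] at hj
    simp only [pm, Finset.mem_erase, Finset.mem_Icc]
    omega
  have := hu.isPermPM.apply_mem_pm hj'
  simp only [pm, Finset.mem_erase, Finset.mem_Icc] at this
  exact Finset.mem_Icc.2 ⟨Int.one_le_abs this.1, abs_le.2 this.2⟩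

theorem even_iff_signProd (hu : IsSignedPerm n u) :
    Even ((Finset.Icc (1 : ℤ) n).filter fun j => u j < 0).card ↔ signProd n u = 1 := by
  have hsign : ∀ j ∈ Finset.Icc (1 : ℤ) n, Int.sign (u j) = if u j < 0 then -1 else 1 := by
    intro j hj
    have h0 : u j ≠ 0 := fun h => by
      have := abs_apply_mem_Icc hu hj
      rw [h] at this
      simp at this
    split_ifs with h
    · exact Int.sign_eq_neg_one_of_neg h
    · exact Int.sign_eq_one_of_pos (by omega)
  rw [signProd, Finset.prod_congr rfl hsign, Finset.prod_ite, Finset.prod_const,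
    Finset.prod_const_one, mul_one, neg_one_pow_eq_one_iff_even (by decide)]

theorem signProd_mul (hu : IsSignedPerm n u) (hv : IsSignedPerm n v) :
    signProd n (u * v) = signProd n u * signProd n v := by
  have hinj : Set.InjOn (fun j => |v j|) (Finset.Icc (1 : ℤ) n) := by
    intro j hj k hk hjk
    simp only [Finset.coe_Icc, Set.mem_Icc] at hj hk
    rcases abs_eq_abs.1 hjk with h | h
    · exact v.injective h
    · rw [← hv.1] at h
      have := v.injective h
      omega
  have himage : (Finset.Icc (1 : ℤ) n).image (fun j => |v j|) = Finset.Icc (1 : ℤ) n :=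
    Finset.eq_of_subset_of_card_le
      (fun k hk => by
        obtain ⟨j, hj, rfl⟩ := Finset.mem_image.1 hk
        exact hv.abs_apply_mem_Icc hj)
      (by rw [Finset.card_image_of_injOn hinj])
  calc signProd n (u * v)
      = ∏ j ∈ Finset.Icc (1 : ℤ) n, Int.sign (u |v j|) * Int.sign (v j) :=
        Finset.prod_congr rfl fun j _ => hu.sign_apply (v j)
    _ = signProd n u * signProd n v := by
        rw [Finset.prod_mul_distrib, signProd, signProd]
        congr 1
        conv_rhs => rw [← himage, Finset.prod_image hinj]

theorem ext_four (hu : IsSignedPerm 4 u) (hv : IsSignedPerm 4 v)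
    (h1 : u 1 = v 1) (h2 : u 2 = v 2) (h3 : u 3 = v 3) (h4 : u 4 = v 4) : u = v :=
  hu.ext hv fun a ha => by
    obtain ⟨ha1, ha4⟩ := Finset.mem_Icc.1 ha
    interval_cases a <;> assumption

end IsSignedPerm

theorem IsEvenSignedPerm.mul {n : ℕ} {u v : Perm ℤ} (hu : IsEvenSignedPerm n u)
    (hv : IsEvenSignedPerm n v) : IsEvenSignedPerm n (u * v) :=
  ⟨hu.1.mul hv.1, (hu.1.mul hv.1).even_iff_signProd.2 <| by
    rw [hu.1.signProd_mul hv.1, hu.1.even_iff_signProd.1 hu.2, hv.1.even_iff_signProd.1 hv.2,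
      one_mul]⟩

theorem isSignedPerm_sgen_s19 {n i : ℕ} (hn : 2 ≤ n) (hi : 1 ≤ i ∧ i ≤ n) :
    IsSignedPerm n (sgen n i) := by
  refine ⟨fun a => ?_, fun a ha => ?_⟩ <;> rw [sgen] <;> split_ifs <;>
    simp only [Perm.mul_apply, swap_apply_def] <;> (try rw [lt_abs] at ha) <;> split_ifs <;> omega

theorem isEvenSignedPerm_sgen {n i : ℕ} (hn : 2 ≤ n) (hi : 1 ≤ i ∧ i ≤ n) :
    IsEvenSignedPerm n (sgen n i) := by
  refine ⟨isSignedPerm_sgen_s19 hn hi, ?_⟩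
  by_cases hin : i = n
  · subst hin
    have : (Finset.Icc (1 : ℤ) i).filter (fun j => sgen i i j < 0) =
        {(i : ℤ) - 1, (i : ℤ)} := by
      ext j
      simp only [Finset.mem_filter, Finset.mem_Icc, Finset.mem_insert, Finset.mem_singleton,
        sgen, if_pos, Perm.mul_apply, swap_apply_def]
      split_ifs <;> omega
    rw [this, Finset.card_pair (by omega)]
    exact even_two
  · have : (Finset.Icc (1 : ℤ) n).filter (fun j => sgen n i j < 0) = ∅ := by
      ext j
      simp only [Finset.mem_filter, Finset.mem_Icc, Finset.notMem_empty, iff_false, not_and,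
        sgen, if_neg hin, Perm.mul_apply, swap_apply_def]
      split_ifs <;> omega
    rw [this, Finset.card_empty]
    exact ⟨0, rfl⟩

theorem isEvenSignedPerm_wordProd {n : ℕ} (hn : 2 ≤ n) {l : List ℕ}
    (hl : ∀ i ∈ l, 1 ≤ i ∧ i ≤ n) : IsEvenSignedPerm n (wordProd n l) := by
  refine List.prod_induction _ (fun _ _ => IsEvenSignedPerm.mul) ?_ fun u hu => ?_
  · refine ⟨⟨fun _ => rfl, fun _ _ => rfl⟩, ?_⟩
    rw [Finset.filter_false_of_mem fun j hj => by simp at hj ⊢; omega]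
    exact ⟨0, rfl⟩
  · obtain ⟨i, hi, rfl⟩ := List.mem_map.1 hu
    exact isEvenSignedPerm_sgen hn (hl i hi)

theorem isPermPM_agen {n k : ℕ} (hk : 1 ≤ k ∧ k ≤ 2 * n - 1) : IsPermPM n (agen n k) := by
  rintro a ha
  rw [agen, ofKey, ofKey, swap_apply_of_ne_of_ne] <;> rw [lt_abs] at ha <;> split_ifs <;> omega

theorem isPermPM_prod_agen {n : ℕ} {l : List ℕ}
    (hl : ∀ k ∈ l, 1 ≤ k ∧ k ≤ 2 * n - 1) :
    IsPermPM n (l.map (agen n)).prod := by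
  refine List.prod_induction _ (fun _ _ => IsPermPM.mul) (fun _ _ => rfl) fun u hu => ?_
  obtain ⟨k, hk, rfl⟩ := List.mem_map.1 hu
  exact isPermPM_agen (hl k hk)

noncomputable def posPairs (n : ℕ) : Finset (ℤ × ℤ) :=
  (pm n ×ˢ pm n).filter fun xy => dkey n xy.1 < dkey n xy.2

def invCount (n : ℕ) (P : Finset (ℤ × ℤ)) (u : Perm ℤ) : ℕ :=
  (P.filter fun xy => dkey n (u xy.2) < dkey n (u xy.1)).card

def flipSet (n : ℕ) (Q : Finset (ℤ × ℤ)) (σ : Perm ℤ) : Finset (ℤ × ℤ) :=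
  Q.filter fun xy => ¬ dkey n xy.2 < dkey n xy.1 ∧ dkey n (σ xy.2) < dkey n (σ xy.1)

theorem invCount_one {n : ℕ} {P : Finset (ℤ × ℤ)} (hP : P ⊆ posPairs n) :
    invCount n P 1 = 0 :=
  Finset.card_eq_zero.2 <| Finset.filter_false_of_mem fun xy hxy => by
    have := (Finset.mem_filter.1 (hP hxy)).2
    simp only [Perm.one_apply]
    omega

theorem invCount_mul_le {n : ℕ} {P Q : Finset (ℤ × ℤ)} {u : Perm ℤ} (σ : Perm ℤ)
    (hPQ : ∀ xy ∈ P, (u xy.1, u xy.2) ∈ Q) :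
    invCount n P (σ * u) ≤ invCount n P u + (flipSet n Q σ).card := by
  classical
  have hsub : (P.filter fun xy => dkey n ((σ * u) xy.2) < dkey n ((σ * u) xy.1)) ⊆
      P.filter (fun xy => dkey n (u xy.2) < dkey n (u xy.1)) ∪
        P.filter (fun xy => (u xy.1, u xy.2) ∈ flipSet n Q σ) := by
    intro xy hxy
    rw [Finset.mem_filter, Perm.mul_apply, Perm.mul_apply] at hxy
    simp only [Finset.mem_union, Finset.mem_filter, flipSet]
    by_cases h : dkey n (u xy.2) < dkey n (u xy.1)
    · exact Or.inl ⟨hxy.1, h⟩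
    · exact Or.inr ⟨hxy.1, hPQ xy hxy.1, h, hxy.2⟩
  have hflip : (P.filter fun xy => (u xy.1, u xy.2) ∈ flipSet n Q σ).card ≤
      (flipSet n Q σ).card :=
    Finset.card_le_card_of_injOn _ (fun xy hxy => (Finset.mem_filter.1 hxy).2)
      fun xy _ xy' _ h => by
        simp only [Prod.mk.injEq, EmbeddingLike.apply_eq_iff_eq] at h
        exact Prod.ext h.1 h.2
  exact (Finset.card_le_card hsub).trans ((Finset.card_union_le _ _).trans
    (Nat.add_le_add_left hflip _))

noncomputable def invA (n : ℕ) (u : Perm ℤ) : ℕ := invCount n (posPairs n) u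

/-- Twice the type-`D` inversion number: an inversion of a signed permutation shows up in its
unfolding at a pair of positions and at the mirror-image pair. -/
noncomputable def invD (n : ℕ) (u : Perm ℤ) : ℕ :=
  invCount n ((posPairs n).filter fun xy => xy.2 ≠ -xy.1) u

theorem invA_agen_mul_le {k : ℕ} (hk : 1 ≤ k ∧ k ≤ 7) {u : Perm ℤ} (hu : IsPermPM 4 u) :
    invA 4 (agen 4 k * u) ≤ invA 4 u + 1 := by
  refine (invCount_mul_le (Q := pm 4 ×ˢ pm 4) _ fun xy hxy => ?_).trans
    (Nat.add_le_add_left ((by decide : ∀ k ∈ Finset.Icc 1 7,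
      (flipSet 4 (pm 4 ×ˢ pm 4) (agen 4 k)).card ≤ 1) k (Finset.mem_Icc.2 hk)) _)
  obtain ⟨h1, h2⟩ := Finset.mem_product.1 (Finset.mem_filter.1 hxy).1
  exact Finset.mem_product.2 ⟨hu.apply_mem_pm h1, hu.apply_mem_pm h2⟩

theorem invD_sgen_mul_le {i : ℕ} (hi : 1 ≤ i ∧ i ≤ 4) {u : Perm ℤ}
    (hu : IsSignedPerm 4 u) :
    invD 4 (sgen 4 i * u) ≤ invD 4 u + 2 := by
  refine (invCount_mul_le (Q := (pm 4 ×ˢ pm 4).filter fun xy => xy.2 ≠ -xy.1) _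
    fun xy hxy => ?_).trans (Nat.add_le_add_left ((by decide : ∀ i ∈ Finset.Icc 1 4,
      (flipSet 4 ((pm 4 ×ˢ pm 4).filter fun xy => xy.2 ≠ -xy.1) (sgen 4 i)).card ≤ 2) i
        (Finset.mem_Icc.2 hi)) _)
  obtain ⟨hxy, hne⟩ := Finset.mem_filter.1 hxy
  obtain ⟨h1, h2⟩ := Finset.mem_product.1 (Finset.mem_filter.1 hxy).1
  refine Finset.mem_filter.2 ⟨Finset.mem_product.2 ⟨hu.isPermPM.apply_mem_pm h1,
    hu.isPermPM.apply_mem_pm h2⟩, fun h => hne (u.injective ?_)⟩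
  rw [hu.1]
  exact h

theorem isReducedWord_agen_of_invA {l : List ℕ} (hl : ∀ k ∈ l, 1 ≤ k ∧ k ≤ 7)
    (h : invA 4 (l.map (agen 4)).prod = l.length) :
    IsReducedWord (agen 4) (fun k => 1 ≤ k ∧ k ≤ 2 * 4 - 1) l :=
  isReducedWord_of_count (c := invA 4) (m := 1) (invCount_one subset_rfl)
    (fun _ _ hk hl => invA_agen_mul_le hk (isPermPM_prod_agen hl)) one_pos hl (by rw [h, one_mul])

theorem isReducedWord_sgen_of_invD {l : List ℕ} (hl : ∀ i ∈ l, 1 ≤ i ∧ i ≤ 4)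
    (h : invD 4 (wordProd 4 l) = 2 * l.length) :
    IsReducedWord (sgen 4) (fun i => 1 ≤ i ∧ i ≤ 4) l :=
  isReducedWord_of_count (c := invD 4) (invCount_one (Finset.filter_subset _ _))
    (fun _ _ hi hl => invD_sgen_mul_le hi (isEvenSignedPerm_wordProd (by norm_num) hl).1)
    two_pos hl h

theorem IsDemazure.isDemazureProduct {n : ℕ} {dem : Perm ℤ → Perm ℤ → Perm ℤ}
    (h : IsDemazure n dem) :
    IsDemazureProduct (sgen n) (fun i => 1 ≤ i ∧ i ≤ n) (IsEvenSignedPerm n) dem where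
  assoc := h.2.1
  one_dem u hu := (h.2.2.1 u hu).1
  gen_dem_of_lt i hi u hu := (h.2.2.2 i hi.1 hi.2 u hu).1
  gen_dem_of_gt i hi u hu := (h.2.2.2 i hi.1 hi.2 u hu).2

theorem IsDemazureA.isDemazureProduct {n : ℕ} {dem : Perm ℤ → Perm ℤ → Perm ℤ}
    (h : IsDemazureA n dem) :
    IsDemazureProduct (agen n) (fun k => 1 ≤ k ∧ k ≤ 2 * n - 1) (IsPermPM n) dem where
  assoc := h.2.1
  one_dem u hu := (h.2.2.1 u hu).1
  gen_dem_of_lt k hk u hu := (h.2.2.2 k hk.1 hk.2 u hu).1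
  gen_dem_of_gt k hk u hu := (h.2.2.2 k hk.1 hk.2 u hu).2

theorem sgen_mul_wordProd_eq {n i : ℕ} (hn : 2 ≤ n) {l l' : List ℕ} (hi : 1 ≤ i ∧ i ≤ n)
    (hl : ∀ j ∈ l, 1 ≤ j ∧ j ≤ n) (hl' : ∀ j ∈ l', 1 ≤ j ∧ j ≤ n)
    (h : ∀ a ∈ Finset.Icc (1 : ℤ) n, sgen n i (wordProd n l a) = wordProd n l' a) :
    sgen n i * wordProd n l = wordProd n l' :=
  ((isSignedPerm_sgen_s19 hn hi).mul (isEvenSignedPerm_wordProd hn hl).1).ext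
    (isEvenSignedPerm_wordProd hn hl').1 h

theorem agen_mul_prod_eq {n k : ℕ} {l l' : List ℕ} (hk : 1 ≤ k ∧ k ≤ 2 * n - 1)
    (hl : ∀ j ∈ l, 1 ≤ j ∧ j ≤ 2 * n - 1)
    (hl' : ∀ j ∈ l', 1 ≤ j ∧ j ≤ 2 * n - 1)
    (h : ∀ a ∈ pm n, agen n k ((l.map (agen n)).prod a) = (l'.map (agen n)).prod a) :
    agen n k * (l.map (agen n)).prod = (l'.map (agen n)).prod :=
  ((isPermPM_agen hk).mul (isPermPM_prod_agen hl)).ext (isPermPM_prod_agen hl') h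

namespace IsDemazure

variable {dem : Perm ℤ → Perm ℤ → Perm ℤ}

theorem dem_wordProd_eq_foldr (h : IsDemazure 4 dem) {l : List ℕ}
    (hl : ∀ i ∈ l, 1 ≤ i ∧ i ≤ 4)
    (hinv : invD 4 (wordProd 4 l) = 2 * l.length) {v : Perm ℤ} (hv : IsEvenSignedPerm 4 v) :
    dem (wordProd 4 l) v = l.foldr (fun i u => dem (sgen 4 i) u) v :=
  h.isDemazureProduct.dem_prod_eq_foldr (fun _ => isEvenSignedPerm_wordProd (by norm_num)) hv
    (isReducedWord_sgen_of_invD hl hinv)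

theorem sgen_dem_wordProd_of_invD (h : IsDemazure 4 dem) {i : ℕ} {l : List ℕ}
    (hl : ∀ j ∈ i :: l, 1 ≤ j ∧ j ≤ 4)
    (hinv : invD 4 (wordProd 4 (i :: l)) = 2 * (l.length + 1)) :
    dem (sgen 4 i) (wordProd 4 l) = wordProd 4 (i :: l) :=
  h.isDemazureProduct.gen_dem_prod_of_isReducedWord
    (fun _ => isEvenSignedPerm_wordProd (by norm_num)) (isReducedWord_sgen_of_invD hl hinv)

theorem sgen_dem_wordProd_of_exchange (h : IsDemazure 4 dem) {i : ℕ} {l : List ℕ} (j : ℕ)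
    (hi : 1 ≤ i ∧ i ≤ 4) (hl : ∀ k ∈ l, 1 ≤ k ∧ k ≤ 4)
    (hinv : invD 4 (wordProd 4 l) = 2 * l.length) (hj : j < l.length)
    (hex : ∀ a ∈ Finset.Icc (1 : ℤ) 4,
      sgen 4 i (wordProd 4 l a) = wordProd 4 (l.eraseIdx j) a) :
    dem (sgen 4 i) (wordProd 4 l) = wordProd 4 l :=
  h.isDemazureProduct.gen_dem_prod_of_exchange (fun _ => isEvenSignedPerm_wordProd (by norm_num))
    hi (isReducedWord_sgen_of_invD hl hinv) hj
    (sgen_mul_wordProd_eq (by norm_num) hi hl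
      (fun k hk => hl k (List.mem_of_mem_eraseIdx hk)) hex)

theorem dem_example (h : IsDemazure 4 dem) :
    dem (wordProd 4 [3, 2, 4, 3]) (wordProd 4 [3, 1, 2, 4, 3, 1, 2]) =
      wordProd 4 [3, 2, 4, 3, 1, 2, 4, 3, 1, 2] := by
  rw [h.dem_wordProd_eq_foldr (by decide) (by decide)
    (isEvenSignedPerm_wordProd (by norm_num) (by decide))]
  simp only [List.foldr_cons, List.foldr_nil]
  rw [h.sgen_dem_wordProd_of_exchange 0, h.sgen_dem_wordProd_of_invD,
    h.sgen_dem_wordProd_of_invD, h.sgen_dem_wordProd_of_invD]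
  all_goals decide

end IsDemazure

theorem wordProd_eq_prod_agen {n : ℕ} (hn : 2 ≤ n) {l l' : List ℕ}
    (hl : ∀ i ∈ l, 1 ≤ i ∧ i ≤ n) (hl' : ∀ k ∈ l', 1 ≤ k ∧ k ≤ 2 * n - 1)
    (h : ∀ a ∈ pm n, wordProd n l a = (l'.map (agen n)).prod a) :
    wordProd n l = (l'.map (agen n)).prod :=
  (isEvenSignedPerm_wordProd hn hl).1.isPermPM.ext (isPermPM_prod_agen hl') h

namespace IsDemazureA

variable {dem : Perm ℤ → Perm ℤ → Perm ℤ}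

theorem dem_prod_eq_foldr (h : IsDemazureA 4 dem) {l : List ℕ}
    (hl : ∀ k ∈ l, 1 ≤ k ∧ k ≤ 7)
    (hinv : invA 4 (l.map (agen 4)).prod = l.length) {v : Perm ℤ} (hv : IsPermPM 4 v) :
    dem (l.map (agen 4)).prod v = l.foldr (fun k u => dem (agen 4 k) u) v :=
  h.isDemazureProduct.dem_prod_eq_foldr (fun _ => isPermPM_prod_agen) hv
    (isReducedWord_agen_of_invA hl hinv)

theorem agen_dem_prod_of_invA (h : IsDemazureA 4 dem) {k : ℕ} {l : List ℕ}
    (hl : ∀ j ∈ k :: l, 1 ≤ j ∧ j ≤ 7)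
    (hinv : invA 4 ((k :: l).map (agen 4)).prod = l.length + 1) :
    dem (agen 4 k) (l.map (agen 4)).prod = ((k :: l).map (agen 4)).prod :=
  h.isDemazureProduct.gen_dem_prod_of_isReducedWord (fun _ => isPermPM_prod_agen)
    (isReducedWord_agen_of_invA hl hinv)

theorem agen_dem_prod_of_exchange (h : IsDemazureA 4 dem) {k : ℕ} {l : List ℕ} (j : ℕ)
    (hk : 1 ≤ k ∧ k ≤ 7) (hl : ∀ i ∈ l, 1 ≤ i ∧ i ≤ 7)
    (hinv : invA 4 (l.map (agen 4)).prod = l.length) (hj : j < l.length)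
    (hex : ∀ a ∈ pm 4,
      agen 4 k ((l.map (agen 4)).prod a) = ((l.eraseIdx j).map (agen 4)).prod a) :
    dem (agen 4 k) (l.map (agen 4)).prod = (l.map (agen 4)).prod :=
  h.isDemazureProduct.gen_dem_prod_of_exchange (fun _ => isPermPM_prod_agen) hk
    (isReducedWord_agen_of_invA hl hinv) hj
    (agen_mul_prod_eq hk hl (fun i hi => hl i (List.mem_of_mem_eraseIdx hi)) hex)

theorem dem_example (h : IsDemazureA 4 dem) :
    dem (wordProd 4 [3, 2, 4, 3]) (wordProd 4 [3, 1, 2, 4, 3, 1, 2]) =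
      ([5, 6, 3, 5, 2, 3, 4, 5, 6, 7, 1, 2, 3, 4, 5, 6, 5, 2, 3, 4, 3, 1, 2].map
        (agen 4)).prod := by
  rw [wordProd_eq_prod_agen (l' := [5, 6, 2, 3, 4, 5, 2, 3, 4, 3]) (by norm_num) (by decide)
      (by decide) (by decide),
    wordProd_eq_prod_agen (l' := [5, 6, 7, 1, 2, 3, 4, 5, 6, 5, 2, 3, 4, 3, 1, 2]) (by norm_num)
      (by decide) (by decide) (by decide),
    h.dem_prod_eq_foldr (by decide) (by decide) (isPermPM_prod_agen (by decide))]
  simp only [List.foldr_cons, List.foldr_nil]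
  rw [h.agen_dem_prod_of_exchange 10, h.agen_dem_prod_of_invA, h.agen_dem_prod_of_invA,
    h.agen_dem_prod_of_invA, h.agen_dem_prod_of_invA, h.agen_dem_prod_of_exchange 15,
    h.agen_dem_prod_of_invA, h.agen_dem_prod_of_exchange 3, h.agen_dem_prod_of_invA,
    h.agen_dem_prod_of_invA]
  all_goals decide

end IsDemazureA

/-- for the even signed permutations `w = [1,4,-2,-3]` and
`v = [4,-1,2,-3]` in `D_4`:
(a) the Demazure product in `D_4` is `w ⋆ v = [-2,-1,4,3]`;
(b) the Demazure product of `w` and `v` in the symmetric group on `±[4]` (type `A_7`) is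
the signed permutation `u = [-2,-1,4,-3]`;
(c) `u` is not even, so `u ∉ D_4` and `u ≠ w ⋆ v`: folding does not commute with the
Demazure product in type `D`. -/
theorem typeD_unfolding_fails
    (w v : Perm ℤ) (hw : IsEvenSignedPerm 4 w) (hv : IsEvenSignedPerm 4 v)
    (hw1 : w 1 = 1) (hw2 : w 2 = 4) (hw3 : w 3 = -2) (hw4 : w 4 = -3)
    (hv1 : v 1 = 4) (hv2 : v 2 = -1) (hv3 : v 3 = 2) (hv4 : v 4 = -3) :
    (∀ dem : Perm ℤ → Perm ℤ → Perm ℤ, IsDemazure 4 dem →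
      dem w v 1 = -2 ∧ dem w v 2 = -1 ∧ dem w v 3 = 4 ∧ dem w v 4 = 3) ∧
    (∀ demA : Perm ℤ → Perm ℤ → Perm ℤ, IsDemazureA 4 demA →
      (demA w v 1 = -2 ∧ demA w v 2 = -1 ∧ demA w v 3 = 4 ∧ demA w v 4 = -3 ∧
        ∀ a : ℤ, demA w v (-a) = -(demA w v a)) ∧
      (¬ IsEvenSignedPerm 4 (demA w v)) ∧
      (∀ dem : Perm ℤ → Perm ℤ → Perm ℤ, IsDemazure 4 dem → demA w v ≠ dem w v)) := by
  have hwD : w = wordProd 4 [3, 2, 4, 3] :=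
    hw.1.ext_four (isEvenSignedPerm_wordProd (by norm_num) (by decide)).1
      (by rw [hw1]; decide) (by rw [hw2]; decide) (by rw [hw3]; decide) (by rw [hw4]; decide)
  have hvD : v = wordProd 4 [3, 1, 2, 4, 3, 1, 2] :=
    hv.1.ext_four (isEvenSignedPerm_wordProd (by norm_num) (by decide)).1
      (by rw [hv1]; decide) (by rw [hv2]; decide) (by rw [hv3]; decide) (by rw [hv4]; decide)
  have hD : ∀ dem, IsDemazure 4 dem → dem w v = wordProd 4 [3, 2, 4, 3, 1, 2, 4, 3, 1, 2] :=
    fun dem h => hwD ▸ hvD ▸ h.dem_example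
  have hA : ∀ demA, IsDemazureA 4 demA → demA w v =
      ([5, 6, 3, 5, 2, 3, 4, 5, 6, 7, 1, 2, 3, 4, 5, 6, 5, 2, 3, 4, 3, 1, 2].map (agen 4)).prod :=
    fun demA h => hwD ▸ hvD ▸ h.dem_example
  refine ⟨fun dem h => by rw [hD dem h]; decide, fun demA h => ?_⟩
  rw [hA demA h]
  refine ⟨⟨by decide, by decide, by decide, by decide,
    ((isPermPM_prod_agen (by decide)).isSignedPerm (by decide)).1⟩,
    fun hev => absurd hev.2 (by decide), fun dem hdem heq => ?_⟩
  rw [hD dem hdem] at heq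
  exact absurd (congrArg (· 4) heq) (by decide)
end
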